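/- The meet operator ⊓ on the symbolic lattice L yields the greatest lower bound: for all l₁, l₂, w ∈ L, if w ⊑ l₁ and w ⊑ l₂, then w ⊑ l₁ ⊓ l₂. -/

import Mathlib

inductive SymExpr (P U B F : Type*) where
  | bot : SymExpr P U B F
  | top : SymExpr P U B F
  | prim : P → SymExpr P U B F
  | unop : U → SymExpr P U B F → SymExpr P U B F
  | binop : B → SymExpr P U B F → SymExpr P U B F → SymExpr P U B F
  | fn : F → List (SymExpr P U B F) → SymExpr P U B F
  | phi : List (SymExpr P U B F) → SymExpr P U B F

namespace SymExpr

variable {P U B F : Type*}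

/-- The partial order `⊑` on the symbolic lattice. -/
inductive Le : SymExpr P U B F → SymExpr P U B F → Prop where
  | bot (l) : Le .bot l
  | top (l) : Le l .top
  | prim (p : P) : Le (.prim p) (.prim p)
  | unop {l l'} (u : U) : Le l l' → Le (.unop u l) (.unop u l')
  | binop {l₁ l₂ l₁' l₂'} (b : B) : Le l₁ l₁' → Le l₂ l₂' →
      Le (.binop b l₁ l₂) (.binop b l₁' l₂')
  | fn {ls ls'} (f : F) : List.Forall₂ Le ls ls' → Le (.fn f ls) (.fn f ls')
  | phi {ls ls'} : List.Forall₂ Le ls ls' → Le (.phi ls) (.phi ls')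

attribute [local instance] Classical.propDecidable

mutual
noncomputable def join : SymExpr P U B F → SymExpr P U B F → SymExpr P U B F
  | .bot, l => l
  | l, .bot => l
  | .prim p, .prim p' => if p = p' then .prim p else .top
  | .unop u l, .unop u' l' => if u = u' then .unop u (join l l') else .top
  | .binop b l₁ l₂, .binop b' l₁' l₂' =>
      if b = b' then .binop b (join l₁ l₁') (join l₂ l₂') else .top
  | .fn f ls, .fn f' ls' =>
      if f = f' ∧ ls.length = ls'.length then .fn f (joinList ls ls') else .top
  | .phi ls, .phi ls' =>
      if ls.length = ls'.length then .phi (joinList ls ls') else .top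
  | _, _ => .top

noncomputable def joinList : List (SymExpr P U B F) → List (SymExpr P U B F) → List (SymExpr P U B F)
  | l :: ls, l' :: ls' => join l l' :: joinList ls ls'
  | _, _ => []
end

mutual
noncomputable def meet : SymExpr P U B F → SymExpr P U B F → SymExpr P U B F
  | .top, l => l
  | l, .top => l
  | .prim p, .prim p' => if p = p' then .prim p else .bot
  | .unop u l, .unop u' l' => if u = u' then .unop u (meet l l') else .bot
  | .binop b l₁ l₂, .binop b' l₁' l₂' =>
      if b = b' then .binop b (meet l₁ l₁') (meet l₂ l₂') else .bot
  | .fn f ls, .fn f' ls' =>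
      if f = f' ∧ ls.length = ls'.length then .fn f (meetList ls ls') else .bot
  | .phi ls, .phi ls' =>
      if ls.length = ls'.length then .phi (meetList ls ls') else .bot
  | _, _ => .bot

noncomputable def meetList : List (SymExpr P U B F) → List (SymExpr P U B F) → List (SymExpr P U B F)
  | l :: ls, l' :: ls' => meet l l' :: meetList ls ls'
  | _, _ => []
end

mutual
def depth : SymExpr P U B F → ℕ
  | .bot => 0
  | .top => 0
  | .prim _ => 0
  | .unop _ l => 1 + depth l
  | .binop _ l₁ l₂ => 1 + max (depth l₁) (depth l₂)
  | .fn _ ls => 1 + depthList ls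
  | .phi ls => 1 + depthList ls

def depthList : List (SymExpr P U B F) → ℕ
  | [] => 0
  | l :: ls => max (depth l) (depthList ls)
end

/-- The widening truncation `T_i`. -/
def trunc : ℕ → SymExpr P U B F → SymExpr P U B F
  | _, .bot => .bot
  | _, .top => .top
  | _, .prim p => .prim p
  | 0, .unop _ _ => .top
  | 0, .binop _ _ _ => .top
  | 0, .fn _ _ => .top
  | 0, .phi _ => .top
  | i + 1, .unop u l => .unop u (trunc i l)
  | i + 1, .binop b l₁ l₂ => .binop b (trunc i l₁) (trunc i l₂)
  | i + 1, .fn f ls => .fn f (ls.map (fun l => trunc i l))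
  | i + 1, .phi ls => .phi (ls.map (fun l => trunc i l))

end SymExpr

theorem List.Forall₂.zipWith {α β : Type*} {R : α → β → Prop} {f : β → β → β}
    {as : List α} {bs bs' : List β}
    (hf : ∀ a ∈ as, ∀ b b', R a b → R a b' → R a (f b b'))
    (h : Forall₂ R as bs) (h' : Forall₂ R as bs') : Forall₂ R as (List.zipWith f bs bs') := by
  induction h generalizing bs' with
  | nil => exact .nil
  | cons hab _ ih =>
    obtain _ | ⟨hab', h'⟩ := h'
    exact .cons (hf _ mem_cons_self _ _ hab hab')
      (ih (fun a ha => hf a (mem_cons_of_mem _ ha)) h')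

namespace SymExpr

variable {P U B F : Type*}

theorem meetList_eq_zipWith (ls ls' : List (SymExpr P U B F)) :
    meetList ls ls' = List.zipWith meet ls ls' := by
  induction ls generalizing ls' with
  | nil => simp [meetList]
  | cons l ls ih => cases ls' <;> simp [meetList, ih]

@[simp]
theorem top_meet (l : SymExpr P U B F) : meet .top l = l := by
  simp [meet]

@[simp]
theorem meet_top (l : SymExpr P U B F) : meet l .top = l := by
  cases l <;> simp [meet]

@[simp]
theorem prim_meet_prim_self (p : P) : meet (.prim p : SymExpr P U B F) (.prim p) = .prim p := by
  simp [meet]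

@[simp]
theorem unop_meet_unop (u : U) (l l' : SymExpr P U B F) :
    meet (.unop u l) (.unop u l') = .unop u (meet l l') := by
  simp [meet]

@[simp]
theorem binop_meet_binop (b : B) (l₁ l₂ l₁' l₂' : SymExpr P U B F) :
    meet (.binop b l₁ l₂) (.binop b l₁' l₂') = .binop b (meet l₁ l₁') (meet l₂ l₂') := by
  simp [meet]

theorem fn_meet_fn (f : F) {ls ls' : List (SymExpr P U B F)} (h : ls.length = ls'.length) :
    meet (.fn f ls) (.fn f ls') = .fn f (List.zipWith meet ls ls') := by
  simp [meet, h, meetList_eq_zipWith]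

theorem phi_meet_phi {ls ls' : List (SymExpr P U B F)} (h : ls.length = ls'.length) :
    meet (.phi ls) (.phi ls') = .phi (List.zipWith meet ls ls') := by
  simp [meet, h, meetList_eq_zipWith]

end SymExpr

/-- the meet is the greatest lower bound. -/
theorem SymExpr.le_meet {P U B F : Type*} (l₁ l₂ w : SymExpr P U B F)
    (h₁ : w.Le l₁) (h₂ : w.Le l₂) : w.Le (l₁.meet l₂) := by
  cases h₁ with
  | bot => exact .bot _
  | top => simpa
  | prim p => cases h₂ <;> simpa using Le.prim p
  | unop u h₁ =>
    cases h₂ with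
    | top => simpa using Le.unop u h₁
    | unop _ h₂ => simpa using Le.unop u (le_meet _ _ _ h₁ h₂)
  | binop b h₁ k₁ =>
    cases h₂ with
    | top => simpa using Le.binop b h₁ k₁
    | binop _ h₂ k₂ => simpa using Le.binop b (le_meet _ _ _ h₁ h₂) (le_meet _ _ _ k₁ k₂)
  | fn f h₁ =>
    cases h₂ with
    | top => simpa using Le.fn f h₁
    | fn _ h₂ =>
      rw [fn_meet_fn f (h₁.length_eq.symm.trans h₂.length_eq)]
      exact .fn f (h₁.zipWith (fun w hw l l' => le_meet l l' w) h₂)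
  | phi h₁ =>
    cases h₂ with
    | top => simpa using Le.phi h₁
    | phi h₂ =>
      rw [phi_meet_phi (h₁.length_eq.symm.trans h₂.length_eq)]
      exact .phi (h₁.zipWith (fun w hw l l' => le_meet l l' w) h₂)
termination_by w
-- In the list cases the recursive call is on an element `w ∈ ws`, recorded by `hw`.
decreasing_by
  all_goals (subst_vars; simp_wf)
  all_goals first | omega | (have := List.sizeOf_lt_of_mem hw; omega)
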